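/- Non-negativity of the explicit scalar scheme: let ψ be a saturation with saturation level α and let U > 0 satisfy |u_{i+1/2}| ≤ U for all i. If 0 ≤ ρ_i ≤ α for all i ∈ ℤ and Δt ≤ Δx/(2·ψ(0)·U), then the updated values satisfy ρ_i' ≥ 0 for all i ∈ ℤ. -/

import Mathlib

/-- A *saturation* with saturation level `α > 0`: a continuous non-increasing function
`ψ : [0,∞) → ℝ` with `ψ α = 0` and `(α − s)·ψ s > 0` for every `s ≥ 0`, `s ≠ α`. -/
def IsSaturation (ψ : ℝ → ℝ) (α : ℝ) : Prop :=
  0 < α ∧ ContinuousOn ψ (Set.Ici 0) ∧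
    (∀ s₁ s₂, 0 ≤ s₁ → s₁ ≤ s₂ → ψ s₂ ≤ ψ s₁) ∧
    ψ α = 0 ∧ ∀ s, 0 ≤ s → s ≠ α → 0 < (α - s) * ψ s

/-- The minmod limiter. -/
noncomputable def minmod (a b c : ℝ) : ℝ :=
  if 0 < a ∧ 0 < b ∧ 0 < c then min a (min b c)
  else if a < 0 ∧ b < 0 ∧ c < 0 then max a (max b c)
  else 0

/-- Minmod mmSlope `(ρ_x)_i`. -/
noncomputable def mmSlope (θ Δx : ℝ) (ρ : ℤ → ℝ) (i : ℤ) : ℝ :=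
  minmod (θ * (ρ (i + 1) - ρ i) / Δx) ((ρ (i + 1) - ρ (i - 1)) / (2 * Δx))
    (θ * (ρ i - ρ (i - 1)) / Δx)

/-- East reconstruction `ρ_i^E`. -/
noncomputable def recE (θ Δx : ℝ) (ρ : ℤ → ℝ) (i : ℤ) : ℝ :=
  ρ i + Δx / 2 * mmSlope θ Δx ρ i

/-- West reconstruction `ρ_i^W`. -/
noncomputable def recW (θ Δx : ℝ) (ρ : ℤ → ℝ) (i : ℤ) : ℝ :=
  ρ i - Δx / 2 * mmSlope θ Δx ρ i

/-- Numerical flux `F_{i+1/2}` of the explicit scalar scheme (with `θ = 2`);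
`u i` denotes the interface velocity `u_{i+1/2}`. -/
noncomputable def numFlux (ψ : ℝ → ℝ) (Δx : ℝ) (ρ u : ℤ → ℝ) (i : ℤ) : ℝ :=
  recE 2 Δx ρ i * ψ (recW 2 Δx ρ (i + 1)) * max (u i) 0 +
    recW 2 Δx ρ (i + 1) * ψ (recE 2 Δx ρ i) * min (u i) 0

/-- The updated cell values `ρ_i'` of the explicit scalar scheme. -/
noncomputable def updateExplicit (ψ : ℝ → ℝ) (Δx Δt : ℝ) (ρ u : ℤ → ℝ) (i : ℤ) : ℝ :=
  ρ i - Δt / Δx * (numFlux ψ Δx ρ u i - numFlux ψ Δx ρ u (i - 1))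


lemma rec_bounds (Δx α : ℝ) (hΔx : 0 < Δx) (ρ : ℤ → ℝ)
    (hρ : ∀ i, 0 ≤ ρ i ∧ ρ i ≤ α) (i : ℤ) :
    0 ≤ recE 2 Δx ρ i ∧ recE 2 Δx ρ i ≤ α ∧ 0 ≤ recW 2 Δx ρ i ∧ recW 2 Δx ρ i ≤ α := by
  have h0 := hρ i
  have h1 := hρ (i + 1)
  have h2 := hρ (i - 1)
  unfold recE recW mmSlope minmod
  split_ifs with hpos hneg
  · obtain ⟨ha, hb, hc⟩ := hpos
    have hmin1 : min (2 * (ρ (i + 1) - ρ i) / Δx) (min ((ρ (i + 1) - ρ (i - 1)) / (2 * Δx))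
        (2 * (ρ i - ρ (i - 1)) / Δx)) ≤ 2 * (ρ (i + 1) - ρ i) / Δx := min_le_left _ _
    have hmin2 : min (2 * (ρ (i + 1) - ρ i) / Δx) (min ((ρ (i + 1) - ρ (i - 1)) / (2 * Δx))
        (2 * (ρ i - ρ (i - 1)) / Δx)) ≤ 2 * (ρ i - ρ (i - 1)) / Δx :=
      le_trans (min_le_right _ _) (min_le_right _ _)
    have hmin0 : 0 < min (2 * (ρ (i + 1) - ρ i) / Δx) (min ((ρ (i + 1) - ρ (i - 1)) / (2 * Δx))
        (2 * (ρ i - ρ (i - 1)) / Δx)) := lt_min ha (lt_min hb hc)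
    set m := min (2 * (ρ (i + 1) - ρ i) / Δx) (min ((ρ (i + 1) - ρ (i - 1)) / (2 * Δx))
        (2 * (ρ i - ρ (i - 1)) / Δx)) with hm
    have e1 : Δx / 2 * m ≤ ρ (i + 1) - ρ i := by
      have := mul_le_mul_of_nonneg_left hmin1 (le_of_lt (by positivity : (0:ℝ) < Δx / 2))
      calc Δx / 2 * m ≤ Δx / 2 * (2 * (ρ (i + 1) - ρ i) / Δx) := this
        _ = ρ (i + 1) - ρ i := by field_simp
    have e2 : Δx / 2 * m ≤ ρ i - ρ (i - 1) := by
      have := mul_le_mul_of_nonneg_left hmin2 (le_of_lt (by positivity : (0:ℝ) < Δx / 2))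
      calc Δx / 2 * m ≤ Δx / 2 * (2 * (ρ i - ρ (i - 1)) / Δx) := this
        _ = ρ i - ρ (i - 1) := by field_simp
    have e0 : 0 ≤ Δx / 2 * m := by positivity
    refine ⟨by linarith [h0.1], by linarith [h1.2], by linarith [h2.1], by linarith [h0.2]⟩
  · obtain ⟨ha, hb, hc⟩ := hneg
    have hmax1 : 2 * (ρ (i + 1) - ρ i) / Δx ≤ max (2 * (ρ (i + 1) - ρ i) / Δx)
        (max ((ρ (i + 1) - ρ (i - 1)) / (2 * Δx)) (2 * (ρ i - ρ (i - 1)) / Δx)) := le_max_left _ _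
    have hmax2 : 2 * (ρ i - ρ (i - 1)) / Δx ≤ max (2 * (ρ (i + 1) - ρ i) / Δx)
        (max ((ρ (i + 1) - ρ (i - 1)) / (2 * Δx)) (2 * (ρ i - ρ (i - 1)) / Δx)) :=
      le_trans (le_max_right _ _) (le_max_right _ _)
    have hmax0 : max (2 * (ρ (i + 1) - ρ i) / Δx)
        (max ((ρ (i + 1) - ρ (i - 1)) / (2 * Δx)) (2 * (ρ i - ρ (i - 1)) / Δx)) < 0 :=
      max_lt ha (max_lt hb hc)
    set m := max (2 * (ρ (i + 1) - ρ i) / Δx)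
        (max ((ρ (i + 1) - ρ (i - 1)) / (2 * Δx)) (2 * (ρ i - ρ (i - 1)) / Δx)) with hm
    have e1 : ρ (i + 1) - ρ i ≤ Δx / 2 * m := by
      have := mul_le_mul_of_nonneg_left hmax1 (le_of_lt (by positivity : (0:ℝ) < Δx / 2))
      calc ρ (i + 1) - ρ i = Δx / 2 * (2 * (ρ (i + 1) - ρ i) / Δx) := by field_simp
        _ ≤ Δx / 2 * m := this
    have e2 : ρ i - ρ (i - 1) ≤ Δx / 2 * m := by
      have := mul_le_mul_of_nonneg_left hmax2 (le_of_lt (by positivity : (0:ℝ) < Δx / 2))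
      calc ρ i - ρ (i - 1) = Δx / 2 * (2 * (ρ i - ρ (i - 1)) / Δx) := by field_simp
        _ ≤ Δx / 2 * m := this
    have e0 : Δx / 2 * m ≤ 0 := mul_nonpos_of_nonneg_of_nonpos (by positivity) (le_of_lt hmax0)
    refine ⟨by linarith [h1.1], by linarith [h0.2], by linarith [h0.1], by linarith [h2.2]⟩
  · simp only [mul_zero]
    refine ⟨by linarith [h0.1], by linarith [h0.2], by linarith [h0.1], by linarith [h0.2]⟩

set_option maxHeartbeats 1000000 in
/-- Non-negativity of the explicit scalar scheme under the CFL condition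
`Δt ≤ Δx/(2·ψ(0)·U)`. -/
theorem explicit_scalar_nonnegativity
    (ψ : ℝ → ℝ) (α : ℝ) (hψ : IsSaturation ψ α)
    (Δx Δt : ℝ) (hΔx : 0 < Δx) (hΔt : 0 < Δt)
    (ρ u : ℤ → ℝ) (U : ℝ) (hU : 0 < U) (hu : ∀ i, |u i| ≤ U)
    (hρ : ∀ i, 0 ≤ ρ i ∧ ρ i ≤ α)
    (hCFL : Δt ≤ Δx / (2 * ψ 0 * U)) :
    ∀ i, 0 ≤ updateExplicit ψ Δx Δt ρ u i := by
  obtain ⟨hα, _, hmono, hψα, hsign⟩ := hψ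
  have hψ0 : 0 < ψ 0 := by
    have := hsign 0 le_rfl (by linarith)
    nlinarith
  -- ψ is nonnegative on [0, α] and bounded by ψ 0
  have hψnn : ∀ s, 0 ≤ s → s ≤ α → 0 ≤ ψ s := fun s hs hsα => by
    have := hmono s α hs hsα; linarith [hψα ▸ this]
  have hψub : ∀ s, 0 ≤ s → ψ s ≤ ψ 0 := fun s hs => hmono 0 s le_rfl hs
  intro i
  have HB := fun j => rec_bounds Δx α hΔx ρ hρ j
  obtain ⟨heI0, heIα, hwI0, hwIα⟩ := HB i
  obtain ⟨_, _, hw10, hw1α⟩ := HB (i + 1)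
  obtain ⟨hem0, hemα, _, _⟩ := HB (i - 1)
  have hi1 : i - 1 + 1 = i := by ring
  unfold updateExplicit numFlux
  rw [hi1]
  set eI := recE 2 Δx ρ i
  set wI := recW 2 Δx ρ i
  set w1 := recW 2 Δx ρ (i + 1)
  set em := recE 2 Δx ρ (i - 1)
  have hEW : eI + wI = 2 * ρ i := by show recE 2 Δx ρ i + recW 2 Δx ρ i = 2 * ρ i; unfold recE recW; ring
  clear_value eI wI w1 em
  have hρi := hρ i
  -- velocity bounds
  have hmax1 : max (u i) 0 ≤ U := max_le (le_trans (le_abs_self _) (hu i)) (le_of_lt hU)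
  have hmax1' : (0:ℝ) ≤ max (u i) 0 := le_max_right _ _
  have hmin2 : -U ≤ min (u (i-1)) 0 :=
    le_min (neg_le_of_abs_le (hu (i-1))) (by linarith)
  have hmin2' : min (u (i-1)) 0 ≤ 0 := min_le_right _ _
  have hmin1' : min (u i) 0 ≤ 0 := min_le_right _ _
  have hmax2' : (0:ℝ) ≤ max (u (i-1)) 0 := le_max_right _ _
  -- ψ values
  have hψw1 : 0 ≤ ψ w1 := hψnn _ hw10 hw1α
  have hψw1u : ψ w1 ≤ ψ 0 := hψub _ hw10
  have hψeI : 0 ≤ ψ eI := hψnn _ heI0 heIα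
  have hψwI : 0 ≤ ψ wI := hψnn _ hwI0 hwIα
  have hψem : 0 ≤ ψ em := hψnn _ hem0 hemα
  have hψemu : ψ em ≤ ψ 0 := hψub _ hem0
  -- term estimates
  have hA : eI * ψ w1 * max (u i) 0 ≤ eI * ψ 0 * U := by
    have h1 : eI * ψ w1 ≤ eI * ψ 0 := mul_le_mul_of_nonneg_left hψw1u heI0
    exact mul_le_mul h1 hmax1 hmax1' (by positivity)
  have hB : w1 * ψ eI * min (u i) 0 ≤ 0 :=
    mul_nonpos_of_nonneg_of_nonpos (mul_nonneg hw10 hψeI) hmin1'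
  have hC : 0 ≤ em * ψ wI * max (u (i-1)) 0 :=
    mul_nonneg (mul_nonneg hem0 hψwI) hmax2'
  have hD : -(wI * ψ 0 * U) ≤ wI * ψ em * min (u (i-1)) 0 := by
    have h1 : wI * ψ em ≤ wI * ψ 0 := mul_le_mul_of_nonneg_left hψemu hwI0
    have h2 : wI * ψ em * (-(min (u (i-1)) 0)) ≤ wI * ψ 0 * U :=
      mul_le_mul h1 (by linarith) (by linarith) (by positivity)
    nlinarith
  -- CFL
  have hCFL' : Δt * (2 * ψ 0 * U) ≤ Δx := by
    rw [le_div_iff₀ (by positivity)] at hCFL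
    linarith
  have key : Δt / Δx * (eI * ψ w1 * max (u i) 0 + w1 * ψ eI * min (u i) 0 -
      (em * ψ wI * max (u (i-1)) 0 + wI * ψ em * min (u (i-1)) 0)) ≤ ρ i := by
    have hsum : eI * ψ w1 * max (u i) 0 + w1 * ψ eI * min (u i) 0 -
        (em * ψ wI * max (u (i-1)) 0 + wI * ψ em * min (u (i-1)) 0) ≤
        2 * ρ i * ψ 0 * U := by clear HB hu hρ; nlinarith [hA, hB, hC, hD, hEW]
    have hlam : (0:ℝ) ≤ Δt / Δx := by positivity
    have h1 := mul_le_mul_of_nonneg_left hsum hlam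
    have h2 : Δt / Δx * (2 * ρ i * ψ 0 * U) ≤ ρ i := by
      rw [div_mul_eq_mul_div, div_le_iff₀ hΔx]
      have := mul_le_mul_of_nonneg_left hCFL' hρi.1
      nlinarith [this]
    linarith
  linarith
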